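/- Upper-bound property of graph coarsening: the coarse optimal welfare is a valid upper bound on the original optimal welfare, φ* ≤ φ̄*; equivalently, for every feasible allocation x ∈ 𝓕 of the original supply chain model, φ(x) ≤ φ̄*. -/

import Mathlib

open Finset

/-- A multi-product supply chain model with nodes `N`, products `P`,
suppliers `S`, consumers `D`, transport edges `L`, and technologies `T`. -/
structure SupplyChain (N P S D L T : Type) where
  /-- node of supplier `i` -/
  nS : S → N
  /-- product of supplier `i` -/
  pS : S → P
  /-- supply capacity `s̄ᵢ` -/
  sBar : S → ℝ
  /-- supply cost `αˢᵢ` -/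
  alphaS : S → ℝ
  /-- node of consumer `j` -/
  nD : D → N
  /-- product of consumer `j` -/
  pD : D → P
  /-- demand capacity `d̄ⱼ` -/
  dBar : D → ℝ
  /-- demand price `α^d_j` -/
  alphaD : D → ℝ
  /-- sending node `n_s(ℓ)` -/
  nsend : L → N
  /-- receiving node `n_r(ℓ)` -/
  nrecv : L → N
  /-- product transported `p(ℓ)` -/
  pL : L → P
  /-- flow capacity `f̄_ℓ` -/
  fBar : L → ℝ
  /-- transport cost `α^f_ℓ` -/
  alphaF : L → ℝ
  /-- node of technology `t` -/
  nT : T → N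
  /-- yield factors `γ_{t,p}` -/
  gamma : T → P → ℝ
  /-- per-facility processing capacity `ξ̄_t` -/
  xiBar : T → ℝ
  /-- maximum number of facilities `ȳ_t` -/
  yBar : T → ℕ
  /-- operating cost `α^ξ_t` -/
  alphaXi : T → ℝ
  /-- installation cost `α^y_t` -/
  alphaY : T → ℝ
  sBar_nonneg : ∀ i, 0 ≤ sBar i
  alphaS_nonneg : ∀ i, 0 ≤ alphaS i
  dBar_nonneg : ∀ j, 0 ≤ dBar j
  alphaD_nonneg : ∀ j, 0 ≤ alphaD j
  fBar_nonneg : ∀ l, 0 ≤ fBar l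
  alphaF_nonneg : ∀ l, 0 ≤ alphaF l
  xiBar_nonneg : ∀ t, 0 ≤ xiBar t
  alphaXi_nonneg : ∀ t, 0 ≤ alphaXi t
  alphaY_nonneg : ∀ t, 0 ≤ alphaY t

/-- An allocation `x = (s, d, f, ξ, y)`. -/
abbrev Alloc (S D L T : Type) : Type :=
  (S → ℝ) × (D → ℝ) × (L → ℝ) × (T → ℝ) × (T → ℤ)

variable {N P S D L T : Type} [Fintype N] [Fintype P] [Fintype S] [Fintype D]
  [Fintype L] [Fintype T] [DecidableEq N] [DecidableEq P]

/-- The feasible set `𝓕` of the supply chain model. -/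
def Feasible (sc : SupplyChain N P S D L T) : Set (Alloc S D L T) :=
  { x | (∀ (n : N) (p : P),
        (∑ i ∈ univ.filter (fun i => sc.nS i = n ∧ sc.pS i = p), x.1 i)
        + (∑ l ∈ univ.filter (fun l => sc.nrecv l = n ∧ sc.pL l = p), x.2.2.1 l)
        - (∑ j ∈ univ.filter (fun j => sc.nD j = n ∧ sc.pD j = p), x.2.1 j)
        - (∑ l ∈ univ.filter (fun l => sc.nsend l = n ∧ sc.pL l = p), x.2.2.1 l)
        + (∑ t ∈ univ.filter (fun t => sc.nT t = n), sc.gamma t p * x.2.2.2.1 t) = 0)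
      ∧ (∀ j, 0 ≤ x.2.1 j ∧ x.2.1 j ≤ sc.dBar j)
      ∧ (∀ i, 0 ≤ x.1 i ∧ x.1 i ≤ sc.sBar i)
      ∧ (∀ l, 0 ≤ x.2.2.1 l ∧ x.2.2.1 l ≤ sc.fBar l)
      ∧ (∀ t, 0 ≤ x.2.2.2.2 t ∧ x.2.2.2.2 t ≤ (sc.yBar t : ℤ))
      ∧ (∀ t, 0 ≤ x.2.2.2.1 t ∧ x.2.2.2.1 t ≤ (x.2.2.2.2 t : ℝ) * sc.xiBar t) }

/-- The total welfare `φ(x)`. -/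
def welfare (sc : SupplyChain N P S D L T) (x : Alloc S D L T) : ℝ :=
  (∑ j, sc.alphaD j * x.2.1 j) - (∑ i, sc.alphaS i * x.1 i)
    - (∑ l, sc.alphaF l * x.2.2.1 l) - (∑ t, sc.alphaXi t * x.2.2.2.1 t)
    - (∑ t, sc.alphaY t * (x.2.2.2.2 t : ℝ))

/-- The optimal welfare `φ* = sup_{x ∈ 𝓕} φ(x)`. -/
noncomputable def phiStar (sc : SupplyChain N P S D L T) : ℝ :=
  sSup (welfare sc '' Feasible sc)

/-- The sampled feasible set `𝓕̲(ℒ_a)`. -/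
def SampledFeasible (sc : SupplyChain N P S D L T) (La : Set L) : Set (Alloc S D L T) :=
  { x ∈ Feasible sc | ∀ l, l ∉ La → x.2.2.1 l = 0 }

/-- The sampled optimal welfare `φ̲*(ℒ_a)`. -/
noncomputable def phiLower (sc : SupplyChain N P S D L T) (La : Set L) : ℝ :=
  sSup (welfare sc '' SampledFeasible sc La)

/-- Graph-coarsening data: a partition map `c : 𝒩 → 𝒞` on nodes together with a
grouping of the global edges into classes indexed by `𝒦`. An edge `ℓ` is local if
`c(n_s(ℓ)) = c(n_r(ℓ))` and global otherwise; each class `k ∈ 𝒦` has a sending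
partition `cs k`, a receiving partition `cr k` with `cs k ≠ cr k`, and a product
`pK k`, and consists of all global edges `ℓ` with `c(n_s(ℓ)) = cs k`,
`c(n_r(ℓ)) = cr k` and `p(ℓ) = pK k`; every global edge lies in exactly one class. -/
structure Coarsening (sc : SupplyChain N P S D L T) (C K : Type) where
  /-- the partition map `c : 𝒩 → 𝒞` -/
  part : N → C
  /-- the sending partition `c_s(k)` of class `k` -/
  cs : K → C
  /-- the receiving partition `c_r(k)` of class `k` -/
  cr : K → C
  /-- the product `p(k)` of class `k` -/
  pK : K → P
  cs_ne_cr : ∀ k, cs k ≠ cr k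
  unique_class : ∀ l : L, part (sc.nsend l) ≠ part (sc.nrecv l) →
    ∃! k : K, cs k = part (sc.nsend l) ∧ cr k = part (sc.nrecv l) ∧ pK k = sc.pL l

variable {C K : Type} [Fintype K] [DecidableEq C]

/-- The set of edges in global-edge class `k`. -/
def classSet (sc : SupplyChain N P S D L T) (co : Coarsening sc C K) (k : K) : Finset L :=
  univ.filter (fun l =>
    co.part (sc.nsend l) = co.cs k ∧ co.part (sc.nrecv l) = co.cr k ∧ sc.pL l = co.pK k)

/-- The aggregated flow `f̂_k = Σ_{ℓ ∈ class k} f_ℓ`. -/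
def aggFlow (sc : SupplyChain N P S D L T) (co : Coarsening sc C K) (f : L → ℝ) (k : K) : ℝ :=
  ∑ l ∈ classSet sc co k, f l

/-- The aggregated capacity `f̄̂_k = Σ_{ℓ ∈ class k} f̄_ℓ`. -/
def aggCap (sc : SupplyChain N P S D L T) (co : Coarsening sc C K) (k : K) : ℝ :=
  ∑ l ∈ classSet sc co k, sc.fBar l

/-- The aggregated cost `α̂_k = min_{ℓ ∈ class k} α^f_ℓ` (as an infimum; for a
nonempty class this is the minimum transport cost over the class). -/
noncomputable def aggCost (sc : SupplyChain N P S D L T) (co : Coarsening sc C K) (k : K) : ℝ :=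
  sInf (sc.alphaF '' (classSet sc co k : Set L))

/-- A coarse allocation `(s, d, g, ξ, y)` with one flow per global-edge class. -/
abbrev CoarseAlloc (S D K T : Type) : Type :=
  (S → ℝ) × (D → ℝ) × (K → ℝ) × (T → ℝ) × (T → ℤ)

/-- The coarse feasible set `𝓕̄`. -/
def CoarseFeasible (sc : SupplyChain N P S D L T) (co : Coarsening sc C K) :
    Set (CoarseAlloc S D K T) :=
  { x | (∀ (c₀ : C) (p : P),
        (∑ i ∈ univ.filter (fun i => co.part (sc.nS i) = c₀ ∧ sc.pS i = p), x.1 i)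
        + (∑ k ∈ univ.filter (fun k => co.cr k = c₀ ∧ co.pK k = p), x.2.2.1 k)
        - (∑ j ∈ univ.filter (fun j => co.part (sc.nD j) = c₀ ∧ sc.pD j = p), x.2.1 j)
        - (∑ k ∈ univ.filter (fun k => co.cs k = c₀ ∧ co.pK k = p), x.2.2.1 k)
        + (∑ t ∈ univ.filter (fun t => co.part (sc.nT t) = c₀), sc.gamma t p * x.2.2.2.1 t) = 0)
      ∧ (∀ j, 0 ≤ x.2.1 j ∧ x.2.1 j ≤ sc.dBar j)
      ∧ (∀ i, 0 ≤ x.1 i ∧ x.1 i ≤ sc.sBar i)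
      ∧ (∀ k, 0 ≤ x.2.2.1 k ∧ x.2.2.1 k ≤ aggCap sc co k)
      ∧ (∀ t, 0 ≤ x.2.2.2.2 t ∧ x.2.2.2.2 t ≤ (sc.yBar t : ℤ))
      ∧ (∀ t, 0 ≤ x.2.2.2.1 t ∧ x.2.2.2.1 t ≤ (x.2.2.2.2 t : ℝ) * sc.xiBar t) }

/-- The coarse welfare `φ̄(s,d,g,ξ,y)`. -/
noncomputable def coarseWelfare (sc : SupplyChain N P S D L T) (co : Coarsening sc C K)
    (x : CoarseAlloc S D K T) : ℝ :=
  (∑ j, sc.alphaD j * x.2.1 j) - (∑ i, sc.alphaS i * x.1 i)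
    - (∑ k, aggCost sc co k * x.2.2.1 k) - (∑ t, sc.alphaXi t * x.2.2.2.1 t)
    - (∑ t, sc.alphaY t * (x.2.2.2.2 t : ℝ))

/-- The coarse optimal welfare `φ̄*`. -/
noncomputable def phiUpper (sc : SupplyChain N P S D L T) (co : Coarsening sc C K) : ℝ :=
  sSup (coarseWelfare sc co '' CoarseFeasible sc co)

/-! Aggregating the flows of each class of global edges turns a feasible allocation into a
coarse-feasible one: summing the node balances over a partition cancels every local edge, which
enters one node of the partition and leaves another. Pricing each class at its cheapest edge can
only lower the transport cost, so the welfare does not decrease. -/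

theorem sum_fiberwise_filter_eq_sum_filter_comp {ι α β M : Type*} [Fintype ι] [Fintype α]
    [DecidableEq α] [DecidableEq β] [AddCommMonoid M] (g : α → β) (key : ι → α)
    (pred : ι → Prop) [DecidablePred pred] (b : β) (f : ι → M) :
    ∑ a ∈ univ.filter (fun a => g a = b), ∑ i ∈ univ.filter (fun i => key i = a ∧ pred i), f i
      = ∑ i ∈ univ.filter (fun i => g (key i) = b ∧ pred i), f i := by
  rw [← sum_fiberwise_of_maps_to (g := key) (t := univ.filter (fun a => g a = b))
    (by simp +contextual)]
  refine sum_congr rfl fun a ha => sum_congr ?_ fun _ _ => rfl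
  ext i
  simp only [mem_filter, mem_univ, true_and] at ha ⊢
  constructor
  · rintro ⟨rfl, hi⟩
    exact ⟨⟨ha, hi⟩, rfl⟩
  · rintro ⟨⟨-, hi⟩, rfl⟩
    exact ⟨rfl, hi⟩

omit [Fintype N] [Fintype P] in
theorem zero_mem_feasible (sc : SupplyChain N P S D L T) : 0 ∈ Feasible sc :=
  ⟨fun n p => by simp, fun j => ⟨le_rfl, sc.dBar_nonneg j⟩, fun i => ⟨le_rfl, sc.sBar_nonneg i⟩,
    fun l => ⟨le_rfl, sc.fBar_nonneg l⟩, fun t => ⟨le_rfl, by simp⟩, fun t => ⟨le_rfl, by simp⟩⟩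

def coarsen (sc : SupplyChain N P S D L T) (co : Coarsening sc C K) (x : Alloc S D L T) :
    CoarseAlloc S D K T :=
  (x.1, x.2.1, aggFlow sc co x.2.2.1, x.2.2.2.1, x.2.2.2.2)

namespace Coarsening

variable {sc : SupplyChain N P S D L T} (co : Coarsening sc C K)

omit [Fintype N] [Fintype P] [Fintype S] [Fintype D] [Fintype T] [DecidableEq N]
  [Fintype K] in
theorem eq_of_mem_classSet {k k' : K} {l : L} (h : l ∈ classSet sc co k)
    (h' : l ∈ classSet sc co k') : k = k' := by
  simp only [classSet, mem_filter, mem_univ, true_and] at h h'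
  have hglobal : co.part (sc.nsend l) ≠ co.part (sc.nrecv l) := h.1 ▸ h.2.1 ▸ co.cs_ne_cr k
  obtain ⟨k₀, -, huniq⟩ := co.unique_class l hglobal
  rw [huniq k ⟨h.1.symm, h.2.1.symm, h.2.2.symm⟩, huniq k' ⟨h'.1.symm, h'.2.1.symm, h'.2.2.symm⟩]

omit [Fintype N] [Fintype P] [Fintype S] [Fintype D] [Fintype T] [DecidableEq N] in
theorem sum_filter_aggFlow (Q : C → C → P → Prop) [∀ a b q, Decidable (Q a b q)] (f : L → ℝ) :
    ∑ k ∈ univ.filter (fun k => Q (co.cs k) (co.cr k) (co.pK k)), aggFlow sc co f k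
      = ∑ l ∈ univ.filter (fun l => Q (co.part (sc.nsend l)) (co.part (sc.nrecv l)) (sc.pL l)
          ∧ ¬co.part (sc.nsend l) = co.part (sc.nrecv l)), f l := by
  classical
  simp only [aggFlow]
  rw [← sum_biUnion fun k _ k' _ hkk' =>
    disjoint_left.2 fun l hl hl' => hkk' (co.eq_of_mem_classSet hl hl')]
  refine sum_congr ?_ fun _ _ => rfl
  ext l
  simp only [mem_biUnion, mem_filter, mem_univ, true_and, classSet]
  constructor
  · rintro ⟨k, hQ, hs, hr, hp⟩
    exact ⟨hs ▸ hr ▸ hp ▸ hQ, hs ▸ hr ▸ co.cs_ne_cr k⟩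
  · rintro ⟨hQ, hglobal⟩
    obtain ⟨k, ⟨hs, hr, hp⟩, -⟩ := co.unique_class l hglobal
    exact ⟨k, hs ▸ hr ▸ hp ▸ hQ, hs.symm, hr.symm, hp.symm⟩

omit [Fintype N] [Fintype P] [Fintype S] [Fintype D] [Fintype T] [DecidableEq N] in
theorem sum_filter_eq_sum_local_add_sum_aggFlow (Q : C → C → P → Prop)
    [∀ a b q, Decidable (Q a b q)] (f : L → ℝ) :
    ∑ l ∈ univ.filter (fun l => Q (co.part (sc.nsend l)) (co.part (sc.nrecv l)) (sc.pL l)), f l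
      = ∑ l ∈ univ.filter (fun l => Q (co.part (sc.nsend l)) (co.part (sc.nrecv l)) (sc.pL l)
          ∧ co.part (sc.nsend l) = co.part (sc.nrecv l)), f l
        + ∑ k ∈ univ.filter (fun k => Q (co.cs k) (co.cr k) (co.pK k)), aggFlow sc co f k := by
  rw [co.sum_filter_aggFlow, ← filter_filter, ← filter_filter, sum_filter_add_sum_filter_not]

omit [Fintype N] [Fintype P] [Fintype S] [Fintype D] [Fintype T] [DecidableEq N] in
theorem sum_recv_sub_sum_send (f : L → ℝ) (c₀ : C) (p : P) :
    ∑ l ∈ univ.filter (fun l => co.part (sc.nrecv l) = c₀ ∧ sc.pL l = p), f l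
      - ∑ l ∈ univ.filter (fun l => co.part (sc.nsend l) = c₀ ∧ sc.pL l = p), f l
      = ∑ k ∈ univ.filter (fun k => co.cr k = c₀ ∧ co.pK k = p), aggFlow sc co f k
        - ∑ k ∈ univ.filter (fun k => co.cs k = c₀ ∧ co.pK k = p), aggFlow sc co f k := by
  have hrecv := co.sum_filter_eq_sum_local_add_sum_aggFlow (fun _ r q => r = c₀ ∧ q = p) f
  have hsend := co.sum_filter_eq_sum_local_add_sum_aggFlow (fun s _ q => s = c₀ ∧ q = p) f
  have hlocal : univ.filter (fun l => (co.part (sc.nrecv l) = c₀ ∧ sc.pL l = p)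
        ∧ co.part (sc.nsend l) = co.part (sc.nrecv l))
      = univ.filter (fun l => (co.part (sc.nsend l) = c₀ ∧ sc.pL l = p)
        ∧ co.part (sc.nsend l) = co.part (sc.nrecv l)) := by
    ext l
    simp only [mem_filter, mem_univ, true_and]
    constructor <;> rintro ⟨⟨rfl, hp⟩, he⟩ <;> simp [he, hp]
  rw [hrecv, hsend, hlocal]
  ring

omit [Fintype P] in
theorem coarsen_mem_coarseFeasible {x : Alloc S D L T} (hx : x ∈ Feasible sc) :
    coarsen sc co x ∈ CoarseFeasible sc co := by
  obtain ⟨hbal, hd, hs, hf, hy, hξ⟩ := hx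
  refine ⟨fun c₀ p => ?_, hd, hs,
    fun k => ⟨sum_nonneg fun l _ => (hf l).1, sum_le_sum fun l _ => (hf l).2⟩, hy, hξ⟩
  have hpart := sum_eq_zero (s := univ.filter (fun n => co.part n = c₀)) fun n _ => hbal n p
  have htech := sum_fiberwise_filter_eq_sum_filter_comp co.part sc.nT (fun _ => True) c₀
    (fun t => sc.gamma t p * x.2.2.2.1 t)
  simp only [and_true] at htech
  simp only [sum_add_distrib, sum_sub_distrib, sum_fiberwise_filter_eq_sum_filter_comp,
    htech] at hpart
  have hflow := co.sum_recv_sub_sum_send x.2.2.1 c₀ p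
  simp only [coarsen]
  linarith

omit [Fintype N] [Fintype P] [Fintype S] [Fintype D] [Fintype T] [DecidableEq N]
  [Fintype K] in
theorem aggCost_nonneg (k : K) : 0 ≤ aggCost sc co k :=
  Real.sInf_nonneg fun _ ⟨l, _, hl⟩ => hl ▸ sc.alphaF_nonneg l

omit [Fintype N] [Fintype P] [Fintype S] [Fintype D] [Fintype T] [DecidableEq N]
  [Fintype K] in
theorem aggCost_le {k : K} {l : L} (hl : l ∈ classSet sc co k) : aggCost sc co k ≤ sc.alphaF l :=
  csInf_le ((Set.toFinite _).image _).bddBelow ⟨l, hl, rfl⟩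

omit [Fintype N] [Fintype P] [Fintype S] [Fintype D] [Fintype T] [DecidableEq N] in
theorem sum_aggCost_mul_aggFlow_le {f : L → ℝ} (hf : ∀ l, 0 ≤ f l) :
    ∑ k, aggCost sc co k * aggFlow sc co f k ≤ ∑ l, sc.alphaF l * f l := by
  classical
  calc ∑ k, aggCost sc co k * aggFlow sc co f k
      ≤ ∑ k, ∑ l ∈ classSet sc co k, sc.alphaF l * f l := by
        refine sum_le_sum fun k _ => ?_
        rw [aggFlow, mul_sum]
        exact sum_le_sum fun l hl => mul_le_mul_of_nonneg_right (co.aggCost_le hl) (hf l)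
    _ = ∑ l ∈ univ.biUnion (classSet sc co), sc.alphaF l * f l :=
        (sum_biUnion fun k _ k' _ hkk' =>
          disjoint_left.2 fun l hl hl' => hkk' (co.eq_of_mem_classSet hl hl')).symm
    _ ≤ ∑ l, sc.alphaF l * f l :=
        sum_le_sum_of_subset_of_nonneg (subset_univ _)
          fun l _ _ => mul_nonneg (sc.alphaF_nonneg l) (hf l)

omit [Fintype N] [Fintype P] in
theorem welfare_le_coarseWelfare_coarsen {x : Alloc S D L T} (hx : x ∈ Feasible sc) :
    welfare sc x ≤ coarseWelfare sc co (coarsen sc co x) := by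
  have hcost := co.sum_aggCost_mul_aggFlow_le fun l => (hx.2.2.2.1 l).1
  unfold welfare coarseWelfare coarsen
  linarith

omit [Fintype N] [Fintype P] [DecidableEq N] in
theorem coarseWelfare_le {x : CoarseAlloc S D K T} (hx : x ∈ CoarseFeasible sc co) :
    coarseWelfare sc co x ≤ ∑ j, sc.alphaD j * sc.dBar j := by
  obtain ⟨-, hd, hs, hg, hy, hξ⟩ := hx
  have hdemand : ∑ j, sc.alphaD j * x.2.1 j ≤ ∑ j, sc.alphaD j * sc.dBar j :=
    sum_le_sum fun j _ => mul_le_mul_of_nonneg_left (hd j).2 (sc.alphaD_nonneg j)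
  have hsupply : 0 ≤ ∑ i, sc.alphaS i * x.1 i :=
    sum_nonneg fun i _ => mul_nonneg (sc.alphaS_nonneg i) (hs i).1
  have htransport : 0 ≤ ∑ k, aggCost sc co k * x.2.2.1 k :=
    sum_nonneg fun k _ => mul_nonneg (co.aggCost_nonneg k) (hg k).1
  have hoperate : 0 ≤ ∑ t, sc.alphaXi t * x.2.2.2.1 t :=
    sum_nonneg fun t _ => mul_nonneg (sc.alphaXi_nonneg t) (hξ t).1
  have hinstall : 0 ≤ ∑ t, sc.alphaY t * (x.2.2.2.2 t : ℝ) :=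
    sum_nonneg fun t _ => mul_nonneg (sc.alphaY_nonneg t) (Int.cast_nonneg (hy t).1)
  unfold coarseWelfare
  linarith

omit [Fintype N] [Fintype P] [DecidableEq N] in
theorem bddAbove_coarseWelfare : BddAbove (coarseWelfare sc co '' CoarseFeasible sc co) :=
  ⟨_, Set.forall_mem_image.2 fun _ => co.coarseWelfare_le⟩

end Coarsening

theorem phiStar_le_phiUpper_general (sc : SupplyChain N P S D L T)
    (co : Coarsening sc C K) :
    phiStar sc ≤ phiUpper sc co
      ∧ ∀ x ∈ Feasible sc, welfare sc x ≤ phiUpper sc co := by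
  have hwelfare : ∀ x ∈ Feasible sc, welfare sc x ≤ phiUpper sc co := fun x hx =>
    (co.welfare_le_coarseWelfare_coarsen hx).trans
      (le_csSup co.bddAbove_coarseWelfare ⟨_, co.coarsen_mem_coarseFeasible hx, rfl⟩)
  exact ⟨csSup_le ⟨_, 0, zero_mem_feasible sc, rfl⟩ (Set.forall_mem_image.2 hwelfare), hwelfare⟩

/-- Upper-bound property of graph coarsening: the coarse optimal
welfare is a valid upper bound on the original optimal welfare, `φ* ≤ φ̄*`;
equivalently, every feasible allocation `x ∈ 𝓕` satisfies `φ(x) ≤ φ̄*`. -/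
theorem phiStar_le_phiUpper (sc : SupplyChain N P S D L T)
    (co : Coarsening sc C K) (hne : ∀ k, (classSet sc co k).Nonempty) :
    phiStar sc ≤ phiUpper sc co
      ∧ ∀ x ∈ Feasible sc, welfare sc x ≤ phiUpper sc co :=
  phiStar_le_phiUpper_general sc co
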